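/- Under the stated setup, if λ₂ = −λ₁ with 0 < |λ₁| < 1, then along even lags lim CD⁻(h)/λ₁ʰ = α·(D₁+D₂) (h → ∞, h even), and along odd lags lim CD⁻(h)/λ₁ʰ = α·(D₁−D₂) (h → ∞, h odd). -/

import Mathlib

open MeasureTheory Filter Topology

/-- The signed power `x^⟨p⟩ = |x|^p · sign x`. -/
noncomputable def spow (x p : ℝ) : ℝ := |x| ^ p * Real.sign x

/-- The unit sphere `S₂ ⊆ ℝ²`. -/
abbrev Sphere2 : Type := {s : ℝ × ℝ // s.1 ^ 2 + s.2 ^ 2 = 1}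

noncomputable def A1 (a1 a2 a3 a4 l1 l2 : ℝ) (j : ℕ) (s : Sphere2) : ℝ :=
  (l2 * l1 ^ j * s.1.1 - l1 ^ j * a1 * s.1.1 - l1 ^ j * a2 * s.1.2) / (l2 - l1)

noncomputable def B1 (a1 a2 a3 a4 l1 l2 : ℝ) (j : ℕ) (s : Sphere2) : ℝ :=
  (-(l1 * l2 ^ j * s.1.1) + l2 ^ j * a1 * s.1.1 + l2 ^ j * a2 * s.1.2) / (l2 - l1)

noncomputable def C1 (a1 a2 a3 a4 l1 l2 : ℝ) (j : ℕ) (s : Sphere2) : ℝ :=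
  (l1 ^ j * (-(a3 * s.1.1) + l2 * s.1.2 - a4 * s.1.2)
    + l2 ^ j * (a3 * s.1.1 - l1 * s.1.2 + a4 * s.1.2)) / (l2 - l1)

/-- The cross-codifference `CD(X₁(t), X₂(t-h))` of the bidimensional α-stable AR(1) model. -/
noncomputable def CDneg (Γ : Measure Sphere2) (α a1 a2 a3 a4 l1 l2 : ℝ) (h : ℕ) : ℝ :=
  ∑' j : ℕ, ∫ s,
    (|l1 ^ h * A1 a1 a2 a3 a4 l1 l2 j s + l2 ^ h * B1 a1 a2 a3 a4 l1 l2 j s| ^ α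
      + |C1 a1 a2 a3 a4 l1 l2 j s| ^ α
      - |C1 a1 a2 a3 a4 l1 l2 j s - (l1 ^ h * A1 a1 a2 a3 a4 l1 l2 j s + l2 ^ h * B1 a1 a2 a3 a4 l1 l2 j s)| ^ α) ∂Γ

/-- The cross-covariation `CV(X₁(t), X₂(t-h))` of the bidimensional α-stable AR(1) model. -/
noncomputable def CVneg (Γ : Measure Sphere2) (α a1 a2 a3 a4 l1 l2 : ℝ) (h : ℕ) : ℝ :=
  ∑' j : ℕ, ∫ s,
    spow (C1 a1 a2 a3 a4 l1 l2 j s) (α - 1) * (l1 ^ h * A1 a1 a2 a3 a4 l1 l2 j s + l2 ^ h * B1 a1 a2 a3 a4 l1 l2 j s) ∂Γ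

noncomputable def D1 (Γ : Measure Sphere2) (α a1 a2 a3 a4 l1 l2 : ℝ) : ℝ :=
  ∑' j : ℕ, ∫ s, A1 a1 a2 a3 a4 l1 l2 j s * spow (C1 a1 a2 a3 a4 l1 l2 j s) (α - 1) ∂Γ

noncomputable def D2 (Γ : Measure Sphere2) (α a1 a2 a3 a4 l1 l2 : ℝ) : ℝ :=
  ∑' j : ℕ, ∫ s, B1 a1 a2 a3 a4 l1 l2 j s * spow (C1 a1 a2 a3 a4 l1 l2 j s) (α - 1) ∂Γ

lemma continuous_abs_rpow {p : ℝ} (hp : 0 < p) : Continuous fun x : ℝ => |x| ^ p := by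
  rw [continuous_iff_continuousAt]; intro x
  exact (Real.continuousAt_rpow_const _ _ (Or.inr hp.le)).comp continuous_abs.continuousAt

lemma abs_spow_le (x p : ℝ) : |spow x p| ≤ |x| ^ p := by
  rw [spow, abs_mul, abs_of_nonneg (Real.rpow_nonneg (abs_nonneg x) p)]
  rcases Real.sign_apply_eq x with h | h | h <;> rw [h] <;> simp <;> positivity

lemma spow_zero (p : ℝ) : spow 0 p = 0 := by simp [spow]

lemma hasDerivAt_abs_rpow_spow {p : ℝ} (hp : 1 < p) (x : ℝ) :
    HasDerivAt (fun t : ℝ => |t| ^ p) (p * spow x (p - 1)) x := by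
  have h := hasDerivAt_abs_rpow x hp
  convert h using 1
  rcases eq_or_ne x 0 with rfl | hx
  · simp [spow]
  · rw [spow, mul_assoc]
    congr 1
    rw [show p - 1 = p - 2 + 1 by ring, Real.rpow_add_one (abs_ne_zero.mpr hx), mul_assoc]
    congr 1
    rcases hx.lt_or_gt with h' | h'
    · rw [Real.sign_of_neg h', abs_of_neg h']; ring
    · rw [Real.sign_of_pos h', abs_of_pos h']; ring

lemma abs_rpow_sub_abs_rpow_le {p : ℝ} (hp : 1 < p) (x y : ℝ) :
    abs (|x| ^ p - |y| ^ p) ≤ p * (|x| + |y|) ^ (p - 1) * |x - y| := by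
  have key : ∀ t ∈ Set.uIcc y x, ‖p * spow t (p - 1)‖ ≤ p * (|x| + |y|) ^ (p - 1) := by
    intro t ht
    rw [Real.norm_eq_abs, abs_mul, abs_of_pos (by linarith : (0:ℝ) < p)]
    gcongr
    calc |spow t (p-1)| ≤ |t| ^ (p-1) := abs_spow_le _ _
      _ ≤ (|x| + |y|) ^ (p - 1) := by
          apply Real.rpow_le_rpow (abs_nonneg t) _ (by linarith)
          rcases Set.mem_uIcc.mp ht with ⟨h1, h2⟩ | ⟨h1, h2⟩
          · calc |t| ≤ max |y| |x| := abs_le_max_abs_abs h1 h2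
              _ ≤ |x| + |y| := by rw [max_le_iff]; constructor <;> linarith [abs_nonneg x, abs_nonneg y]
          · calc |t| ≤ max |x| |y| := abs_le_max_abs_abs h1 h2
              _ ≤ |x| + |y| := by rw [max_le_iff]; constructor <;> linarith [abs_nonneg x, abs_nonneg y]
  have := Convex.norm_image_sub_le_of_norm_hasDerivWithin_le
    (f := fun t => |t| ^ p) (f' := fun t => p * spow t (p - 1))
    (fun t ht => (hasDerivAt_abs_rpow_spow hp t).hasDerivWithinAt) key
    (convex_uIcc y x) (Set.right_mem_uIcc) (Set.left_mem_uIcc)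
  simpa [Real.norm_eq_abs, abs_sub_comm] using this

lemma scalar_bound {p : ℝ} (hp : 1 < p) {e g c M : ℝ} (he0 : e ≠ 0) (he1 : |e| ≤ 1)
    (hM : 0 ≤ M) (hg : |g| ≤ M) (hc : |c| ≤ M) :
    |(|e * g| ^ p + |c| ^ p - |c - e * g| ^ p) / e| ≤ (1 + p * 3 ^ (p - 1)) * M ^ p := by
  have hp0 : (0:ℝ) < p := by linarith
  have hep : 0 < |e| := abs_pos.mpr he0
  have h3M : (0:ℝ) ≤ 3 * M := by linarith
  have hMp1 : M ^ (p - 1) * M = M ^ p := by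
    rcases hM.eq_or_lt with h | h
    · rw [← h]; rw [Real.zero_rpow (by linarith : p - 1 ≠ 0), Real.zero_rpow (by linarith : p ≠ 0)]; ring
    · rw [← Real.rpow_add_one h.ne']; norm_num
  rw [abs_div, div_le_iff₀ hep]
  have hnum : |(|e * g| ^ p + |c| ^ p - |c - e * g| ^ p)|
      ≤ |e * g| ^ p + p * (|c| + |c - e * g|) ^ (p - 1) * |e * g| := by
    have hre : (|e * g| ^ p + |c| ^ p - |c - e * g| ^ p)
        = |e * g| ^ p + (|c| ^ p - |c - e * g| ^ p) := by ring
    rw [hre]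
    refine (abs_add_le _ _).trans ?_
    refine add_le_add ?_ ?_
    · rw [abs_of_nonneg (Real.rpow_nonneg (abs_nonneg _) p)]
    · refine (abs_rpow_sub_abs_rpow_le hp c (c - e * g)).trans_eq ?_
      congr 2
      ring_nf
  have heg : |e * g| ≤ |e| * M := by rw [abs_mul]; exact mul_le_mul_of_nonneg_left hg (abs_nonneg e)
  have hegM : |e * g| ≤ M := heg.trans (by nlinarith)
  have h1 : |e * g| ^ p ≤ M ^ p * |e| := by
    rw [abs_mul, Real.mul_rpow (abs_nonneg e) (abs_nonneg g)]
    have he' : |e| ^ p ≤ |e| := by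
      calc |e| ^ p = |e| ^ (p - 1) * |e| := by
            rw [← Real.rpow_add_one (abs_ne_zero.mpr he0)]; norm_num
        _ ≤ 1 * |e| := by
            gcongr
            exact Real.rpow_le_one (abs_nonneg e) he1 (by linarith)
        _ = |e| := one_mul _
    calc |e| ^ p * |g| ^ p ≤ |e| * M ^ p :=
          mul_le_mul he' (Real.rpow_le_rpow (abs_nonneg g) hg hp0.le)
            (Real.rpow_nonneg (abs_nonneg g) p) (abs_nonneg e)
      _ = M ^ p * |e| := mul_comm _ _
  have h2 : p * (|c| + |c - e * g|) ^ (p - 1) * |e * g| ≤ p * 3 ^ (p - 1) * M ^ p * |e| := by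
    have hsum : |c| + |c - e * g| ≤ 3 * M := by
      have ht : |c - e * g| ≤ |c| + |e * g| := abs_sub _ _
      linarith
    have hstep : p * (|c| + |c - e * g|) ^ (p - 1) * |e * g|
        ≤ p * (3 * M) ^ (p - 1) * (|e| * M) := by
      refine mul_le_mul ?_ heg (abs_nonneg _) (by positivity)
      refine mul_le_mul_of_nonneg_left ?_ hp0.le
      exact Real.rpow_le_rpow (by positivity) hsum (by linarith)
    refine hstep.trans_eq ?_
    rw [Real.mul_rpow (by norm_num : (0:ℝ) ≤ 3) hM]
    calc p * (3 ^ (p - 1) * M ^ (p - 1)) * (|e| * M)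
        = p * 3 ^ (p - 1) * (M ^ (p - 1) * M) * |e| := by ring
      _ = p * 3 ^ (p - 1) * M ^ p * |e| := by rw [hMp1]
  calc |(|e * g| ^ p + |c| ^ p - |c - e * g| ^ p)|
      ≤ |e * g| ^ p + p * (|c| + |c - e * g|) ^ (p - 1) * |e * g| := hnum
    _ ≤ M ^ p * |e| + p * 3 ^ (p - 1) * M ^ p * |e| := add_le_add h1 h2
    _ = (1 + p * 3 ^ (p - 1)) * M ^ p * |e| := by ring

lemma scalar_tendsto {p : ℝ} (hp : 1 < p) (g c : ℝ) (ε : ℕ → ℝ)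
    (hε : Tendsto ε atTop (𝓝 0)) (hε0 : ∀ k, ε k ≠ 0) :
    Tendsto (fun k => (|ε k * g| ^ p + |c| ^ p - |c - ε k * g| ^ p) / ε k) atTop
      (𝓝 (p * (g * spow c (p - 1)))) := by
  have hp0 : (0:ℝ) < p := by linarith
  have h1 : HasDerivAt (fun e : ℝ => e * g) g 0 := hasDerivAt_mul_const g
  have h2 : HasDerivAt (fun e : ℝ => |e * g| ^ p) (p * spow ((0:ℝ) * g) (p - 1) * g) 0 :=
    by have := (hasDerivAt_abs_rpow_spow hp ((0:ℝ) * g)).comp 0 h1; exact this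
  have h3 : HasDerivAt (fun e : ℝ => c - e * g) (0 - g) 0 := (hasDerivAt_const (0:ℝ) c).sub h1
  have h4 : HasDerivAt (fun e : ℝ => |c - e * g| ^ p)
      (p * spow ((fun e : ℝ => c - e * g) 0) (p - 1) * (0 - g)) 0 :=
    (hasDerivAt_abs_rpow_spow hp _).comp 0 h3
  have hψ : HasDerivAt (fun e : ℝ => |e * g| ^ p + |c| ^ p - |c - e * g| ^ p)
      (p * (g * spow c (p - 1))) 0 := by
    have : HasDerivAt (fun e : ℝ => |e * g| ^ p + |c| ^ p - |c - e * g| ^ p)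
        (p * spow ((0:ℝ) * g) (p - 1) * g - p * spow ((fun e : ℝ => c - e * g) 0) (p - 1) * (0 - g)) 0 :=
      (h2.add_const (|c| ^ p)).sub h4
    convert this using 1
    simp only [zero_mul, spow_zero, mul_zero, zero_sub, sub_zero]
    ring_nf
  rw [hasDerivAt_iff_tendsto_slope] at hψ
  have hεt : Tendsto ε atTop (𝓝[≠] (0:ℝ)) :=
    tendsto_nhdsWithin_of_tendsto_nhds_of_eventually_within _ hε
      (Eventually.of_forall fun k => hε0 k)
  refine (hψ.comp hεt).congr fun k => ?_
  have h0 : (fun e : ℝ => |e * g| ^ p + |c| ^ p - |c - e * g| ^ p) 0 = 0 := by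
    simp [Real.zero_rpow (by linarith : p ≠ 0)]
  show slope (fun e : ℝ => |e * g| ^ p + |c| ^ p - |c - e * g| ^ p) 0 (ε k) = _
  rw [slope_def_field]
  simp [h0, Real.zero_rpow (show p ≠ 0 by linarith)]

lemma rpow_geom_eq {K r : ℝ} (hK : 0 ≤ K) (hr0 : 0 ≤ r) (p : ℝ) (j : ℕ) :
    (K * r ^ j) ^ p = K ^ p * (r ^ p) ^ j := by
  rw [Real.mul_rpow hK (pow_nonneg hr0 j)]
  congr 1
  rw [← Real.rpow_natCast r j, ← Real.rpow_natCast (r ^ p) j, ← Real.rpow_mul hr0,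
    ← Real.rpow_mul hr0, mul_comm]

lemma key_tendsto {Ω : Type*} [MeasurableSpace Ω] (Γ : Measure Ω) [IsFiniteMeasure Γ]
    {p : ℝ} (hp : 1 < p) (G C : ℕ → Ω → ℝ) (K r : ℝ) (hK : 0 ≤ K) (hr0 : 0 ≤ r) (hr1 : r < 1)
    (hGm : ∀ j, Measurable (G j)) (hCm : ∀ j, Measurable (C j))
    (hGb : ∀ j s, |G j s| ≤ K * r ^ j) (hCb : ∀ j s, |C j s| ≤ K * r ^ j)
    (ε : ℕ → ℝ) (hε : Tendsto ε atTop (𝓝 0)) (hε0 : ∀ k, ε k ≠ 0) :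
    Tendsto (fun k => ∑' j : ℕ, (∫ s, (|ε k * G j s| ^ p + |C j s| ^ p
        - |C j s - ε k * G j s| ^ p) ∂Γ) / ε k) atTop
      (𝓝 (∑' j : ℕ, ∫ s, p * (G j s * spow (C j s) (p - 1)) ∂Γ)) := by
  have hp0 : (0:ℝ) < p := by linarith
  set c : ℝ := (Γ Set.univ).toReal with hc
  have hc0 : 0 ≤ c := ENNReal.toReal_nonneg
  have hrp0 : (0:ℝ) ≤ r ^ p := Real.rpow_nonneg hr0 p
  have hrp1 : r ^ p < 1 := Real.rpow_lt_one hr0 hr1 hp0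
  have hMn : ∀ j : ℕ, (0:ℝ) ≤ K * r ^ j := fun j => mul_nonneg hK (pow_nonneg hr0 j)
  have he1 : ∀ᶠ k in atTop, |ε k| ≤ 1 := by
    filter_upwards [hε (Metric.closedBall_mem_nhds (0:ℝ) one_pos)] with k hk
    simpa [Real.dist_eq] using hk
  -- the scalar pointwise bound, instantiated
  have hbnd : ∀ k, |ε k| ≤ 1 → ∀ j (s : Ω),
      |(|ε k * G j s| ^ p + |C j s| ^ p - |C j s - ε k * G j s| ^ p) / ε k|
        ≤ (1 + p * 3 ^ (p - 1)) * (K ^ p * (r ^ p) ^ j) := by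
    intro k hk j s
    have := scalar_bound hp (hε0 k) hk (hMn j) (hGb j s) (hCb j s)
    rwa [rpow_geom_eq hK hr0 p j] at this
  have hmeas : ∀ k j, Measurable (fun s : Ω =>
      (|ε k * G j s| ^ p + |C j s| ^ p - |C j s - ε k * G j s| ^ p) / ε k) := by
    intro k j
    have m1 : Measurable fun s : Ω => |ε k * G j s| ^ p :=
      (continuous_abs_rpow hp0).measurable.comp (measurable_const.mul (hGm j))
    have m2 : Measurable fun s : Ω => |C j s| ^ p :=
      (continuous_abs_rpow hp0).measurable.comp (hCm j)
    have m3 : Measurable fun s : Ω => |C j s - ε k * G j s| ^ p :=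
      (continuous_abs_rpow hp0).measurable.comp ((hCm j).sub (measurable_const.mul (hGm j)))
    exact ((m1.add m2).sub m3).div_const _
  refine tendsto_tsum_of_dominated_convergence
    (bound := fun j : ℕ => ((1 + p * 3 ^ (p - 1)) * (K ^ p * (r ^ p) ^ j)) * c) ?_ ?_ ?_
  · have : Summable fun j : ℕ => (r ^ p) ^ j := summable_geometric_of_lt_one hrp0 hrp1
    exact (((this.mul_left (K ^ p)).mul_left (1 + p * 3 ^ (p - 1))).mul_right c)
  · intro j
    have hrw : (fun k => (∫ s, (|ε k * G j s| ^ p + |C j s| ^ p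
        - |C j s - ε k * G j s| ^ p) ∂Γ) / ε k)
        = fun k => ∫ s, (|ε k * G j s| ^ p + |C j s| ^ p
          - |C j s - ε k * G j s| ^ p) / ε k ∂Γ :=
      funext fun k => (integral_div _ _).symm
    rw [hrw]
    refine tendsto_integral_filter_of_dominated_convergence
      (bound := fun _ => (1 + p * 3 ^ (p - 1)) * (K ^ p * (r ^ p) ^ j)) ?_ ?_ ?_ ?_
    · exact Eventually.of_forall fun k => (hmeas k j).aestronglyMeasurable
    · filter_upwards [he1] with k hk
      exact ae_of_all _ fun s => by
        rw [Real.norm_eq_abs]; exact hbnd k hk j s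
    · exact integrable_const _
    · exact ae_of_all _ fun s => scalar_tendsto hp (G j s) (C j s) ε hε hε0
  · filter_upwards [he1] with k hk
    intro j
    rw [Real.norm_eq_abs, show (∫ s, (|ε k * G j s| ^ p + |C j s| ^ p
        - |C j s - ε k * G j s| ^ p) ∂Γ) / ε k
        = ∫ s, (|ε k * G j s| ^ p + |C j s| ^ p - |C j s - ε k * G j s| ^ p) / ε k ∂Γ
      from (integral_div _ _).symm, ← Real.norm_eq_abs]
    exact norm_integral_le_of_norm_le_const (ae_of_all _ fun s => by
      rw [Real.norm_eq_abs]; exact hbnd k hk j s)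

lemma measurable_real_sign : Measurable Real.sign := by
  have h : Real.sign = fun r : ℝ => if r < 0 then (-1:ℝ) else if 0 < r then 1 else 0 := rfl
  rw [h]
  exact Measurable.ite (measurableSet_lt measurable_id measurable_const) measurable_const
    (Measurable.ite (measurableSet_lt measurable_const measurable_id) measurable_const
      measurable_const)

lemma measurable_spow {p : ℝ} (hp : 0 < p) : Measurable fun x : ℝ => spow x p :=
  ((continuous_abs_rpow hp).measurable).mul measurable_real_sign

lemma sphere_abs_fst (s : Sphere2) : |s.1.1| ≤ 1 := by
  nlinarith [s.2, sq_nonneg s.1.2, sq_abs s.1.1, abs_nonneg s.1.1]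

lemma sphere_abs_snd (s : Sphere2) : |s.1.2| ≤ 1 := by
  nlinarith [s.2, sq_nonneg s.1.1, sq_abs s.1.2, abs_nonneg s.1.2]

lemma sphere_meas_fst : Measurable fun s : Sphere2 => s.1.1 :=
  measurable_fst.comp measurable_subtype_coe

lemma sphere_meas_snd : Measurable fun s : Sphere2 => s.1.2 :=
  measurable_snd.comp measurable_subtype_coe

lemma measurable_A1 (a1 a2 a3 a4 l1 l2 : ℝ) (j : ℕ) :
    Measurable fun s : Sphere2 => A1 a1 a2 a3 a4 l1 l2 j s := by
  unfold A1
  have h1 := sphere_meas_fst; have h2 := sphere_meas_snd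
  fun_prop

lemma measurable_B1 (a1 a2 a3 a4 l1 l2 : ℝ) (j : ℕ) :
    Measurable fun s : Sphere2 => B1 a1 a2 a3 a4 l1 l2 j s := by
  unfold B1
  have h1 := sphere_meas_fst; have h2 := sphere_meas_snd
  fun_prop

lemma measurable_C1 (a1 a2 a3 a4 l1 l2 : ℝ) (j : ℕ) :
    Measurable fun s : Sphere2 => C1 a1 a2 a3 a4 l1 l2 j s := by
  unfold C1
  have h1 := sphere_meas_fst; have h2 := sphere_meas_snd
  fun_prop

lemma abs_sub3 (x y z : ℝ) : |x - y - z| ≤ |x| + |y| + |z| := by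
  have h1 := abs_sub (x - y) z
  have h2 := abs_sub x y
  linarith

lemma A1_bound (a1 a2 a3 a4 l1 l2 : ℝ) (j : ℕ) (s : Sphere2) :
    |A1 a1 a2 a3 a4 l1 l2 j s| ≤ ((|l2| + |a1| + |a2|) / |l2 - l1|) * |l1| ^ j := by
  unfold A1
  rw [abs_div, div_mul_eq_mul_div]
  rcases eq_or_ne (l2 - l1) 0 with hd | hd
  · simp [hd]
  have hdp : (0:ℝ) < |l2 - l1| := abs_pos.mpr hd
  rw [div_le_div_iff_of_pos_right hdp]
  refine (abs_sub3 _ _ _).trans ?_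
  have e1 : |l2 * l1 ^ j * s.1.1| ≤ |l2| * |l1| ^ j := by
    rw [abs_mul, abs_mul, abs_pow]
    exact mul_le_of_le_one_right (by positivity) (sphere_abs_fst s)
  have e2 : |l1 ^ j * a1 * s.1.1| ≤ |a1| * |l1| ^ j := by
    rw [abs_mul, abs_mul, abs_pow]
    calc |l1| ^ j * |a1| * |s.1.1| ≤ |l1| ^ j * |a1| * 1 :=
          mul_le_mul_of_nonneg_left (sphere_abs_fst s) (by positivity)
      _ = |a1| * |l1| ^ j := by ring
  have e3 : |l1 ^ j * a2 * s.1.2| ≤ |a2| * |l1| ^ j := by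
    rw [abs_mul, abs_mul, abs_pow]
    calc |l1| ^ j * |a2| * |s.1.2| ≤ |l1| ^ j * |a2| * 1 :=
          mul_le_mul_of_nonneg_left (sphere_abs_snd s) (by positivity)
      _ = |a2| * |l1| ^ j := by ring
  have hr : (|l2| + |a1| + |a2|) * |l1| ^ j
      = |l2| * |l1| ^ j + |a1| * |l1| ^ j + |a2| * |l1| ^ j := by ring
  rw [hr]; linarith

lemma B1_bound (a1 a2 a3 a4 l1 l2 : ℝ) (j : ℕ) (s : Sphere2) :
    |B1 a1 a2 a3 a4 l1 l2 j s| ≤ ((|l1| + |a1| + |a2|) / |l2 - l1|) * |l2| ^ j := by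
  unfold B1
  rw [abs_div, div_mul_eq_mul_div]
  rcases eq_or_ne (l2 - l1) 0 with hd | hd
  · simp [hd]
  have hdp : (0:ℝ) < |l2 - l1| := abs_pos.mpr hd
  rw [div_le_div_iff_of_pos_right hdp]
  have e0 : |(-(l1 * l2 ^ j * s.1.1) + l2 ^ j * a1 * s.1.1 + l2 ^ j * a2 * s.1.2)|
      ≤ |l1 * l2 ^ j * s.1.1| + |l2 ^ j * a1 * s.1.1| + |l2 ^ j * a2 * s.1.2| := by
    refine (abs_add_le _ _).trans ?_
    have := (abs_add_le (-(l1 * l2 ^ j * s.1.1)) (l2 ^ j * a1 * s.1.1))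
    rw [abs_neg] at this
    linarith
  refine e0.trans ?_
  have e1 : |l1 * l2 ^ j * s.1.1| ≤ |l1| * |l2| ^ j := by
    rw [abs_mul, abs_mul, abs_pow]
    exact mul_le_of_le_one_right (by positivity) (sphere_abs_fst s)
  have e2 : |l2 ^ j * a1 * s.1.1| ≤ |a1| * |l2| ^ j := by
    rw [abs_mul, abs_mul, abs_pow]
    calc |l2| ^ j * |a1| * |s.1.1| ≤ |l2| ^ j * |a1| * 1 :=
          mul_le_mul_of_nonneg_left (sphere_abs_fst s) (by positivity)
      _ = |a1| * |l2| ^ j := by ring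
  have e3 : |l2 ^ j * a2 * s.1.2| ≤ |a2| * |l2| ^ j := by
    rw [abs_mul, abs_mul, abs_pow]
    calc |l2| ^ j * |a2| * |s.1.2| ≤ |l2| ^ j * |a2| * 1 :=
          mul_le_mul_of_nonneg_left (sphere_abs_snd s) (by positivity)
      _ = |a2| * |l2| ^ j := by ring
  have hr : (|l1| + |a1| + |a2|) * |l2| ^ j
      = |l1| * |l2| ^ j + |a1| * |l2| ^ j + |a2| * |l2| ^ j := by ring
  rw [hr]; linarith

lemma C1_bound (a1 a2 a3 a4 l1 l2 : ℝ) (j : ℕ) (s : Sphere2) :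
    |C1 a1 a2 a3 a4 l1 l2 j s| ≤ ((|a3| + |l2| + |a4|) / |l2 - l1|) * |l1| ^ j
      + ((|a3| + |l1| + |a4|) / |l2 - l1|) * |l2| ^ j := by
  unfold C1
  rcases eq_or_ne (l2 - l1) 0 with hd | hd
  · simp [hd]
  have hdp : (0:ℝ) < |l2 - l1| := abs_pos.mpr hd
  rw [abs_div, div_mul_eq_mul_div, div_mul_eq_mul_div, ← add_div,
    div_le_div_iff_of_pos_right hdp]
  have hu : |(-(a3 * s.1.1) + l2 * s.1.2 - a4 * s.1.2)| ≤ |a3| + |l2| + |a4| := by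
    have t1 : |a3 * s.1.1| ≤ |a3| := by
      rw [abs_mul]; exact mul_le_of_le_one_right (abs_nonneg _) (sphere_abs_fst s)
    have t2 : |l2 * s.1.2| ≤ |l2| := by
      rw [abs_mul]; exact mul_le_of_le_one_right (abs_nonneg _) (sphere_abs_snd s)
    have t3 : |a4 * s.1.2| ≤ |a4| := by
      rw [abs_mul]; exact mul_le_of_le_one_right (abs_nonneg _) (sphere_abs_snd s)
    have h0 := abs_sub (-(a3 * s.1.1) + l2 * s.1.2) (a4 * s.1.2)
    have h1 := abs_add_le (-(a3 * s.1.1)) (l2 * s.1.2)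
    rw [abs_neg] at h1
    linarith
  have hv : |(a3 * s.1.1 - l1 * s.1.2 + a4 * s.1.2)| ≤ |a3| + |l1| + |a4| := by
    have t1 : |a3 * s.1.1| ≤ |a3| := by
      rw [abs_mul]; exact mul_le_of_le_one_right (abs_nonneg _) (sphere_abs_fst s)
    have t2 : |l1 * s.1.2| ≤ |l1| := by
      rw [abs_mul]; exact mul_le_of_le_one_right (abs_nonneg _) (sphere_abs_snd s)
    have t3 : |a4 * s.1.2| ≤ |a4| := by
      rw [abs_mul]; exact mul_le_of_le_one_right (abs_nonneg _) (sphere_abs_snd s)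
    have h0 := abs_add_le (a3 * s.1.1 - l1 * s.1.2) (a4 * s.1.2)
    have h1 := abs_sub (a3 * s.1.1) (l1 * s.1.2)
    linarith
  calc |(l1 ^ j * (-(a3 * s.1.1) + l2 * s.1.2 - a4 * s.1.2)
        + l2 ^ j * (a3 * s.1.1 - l1 * s.1.2 + a4 * s.1.2))|
      ≤ |l1 ^ j * (-(a3 * s.1.1) + l2 * s.1.2 - a4 * s.1.2)|
        + |l2 ^ j * (a3 * s.1.1 - l1 * s.1.2 + a4 * s.1.2)| := abs_add_le _ _
    _ ≤ |l1| ^ j * (|a3| + |l2| + |a4|) + |l2| ^ j * (|a3| + |l1| + |a4|) := by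
        rw [abs_mul, abs_mul, abs_pow, abs_pow]
        exact add_le_add (mul_le_mul_of_nonneg_left hu (by positivity))
          (mul_le_mul_of_nonneg_left hv (by positivity))
    _ = (|a3| + |l2| + |a4|) * |l1| ^ j + (|a3| + |l1| + |a4|) * |l2| ^ j := by ring

theorem CD_neg_asymptotic_cases_IV_V
    (Γ : Measure Sphere2) [IsFiniteMeasure Γ]
    (α a1 a2 a3 a4 l1 l2 : ℝ) (hα1 : 1 < α) (hα2 : α < 2)
    (hl1 : l1 ^ 2 - (a1 + a4) * l1 + (a1 * a4 - a2 * a3) = 0)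
    (hl2 : l2 ^ 2 - (a1 + a4) * l2 + (a1 * a4 - a2 * a3) = 0)
    (hne : l1 ≠ l2) (habs1 : |l1| < 1) (habs2 : |l2| < 1)
    (hopp : l2 = -l1) (hl0 : 0 < |l1|) :
    Tendsto (fun k : ℕ => CDneg Γ α a1 a2 a3 a4 l1 l2 (2 * k) / l1 ^ (2 * k)) atTop
        (𝓝 (α * (D1 Γ α a1 a2 a3 a4 l1 l2 + D2 Γ α a1 a2 a3 a4 l1 l2))) ∧
    Tendsto (fun k : ℕ => CDneg Γ α a1 a2 a3 a4 l1 l2 (2 * k + 1) / l1 ^ (2 * k + 1)) atTop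
        (𝓝 (α * (D1 Γ α a1 a2 a3 a4 l1 l2 - D2 Γ α a1 a2 a3 a4 l1 l2))) := by
  have hα0 : (0:ℝ) < α := by linarith
  have hα10 : (0:ℝ) < α - 1 := by linarith
  have hl1ne : l1 ≠ 0 := abs_pos.mp hl0
  have hdne : l2 - l1 ≠ 0 := sub_ne_zero.mpr (Ne.symm hne)
  have hdp : (0:ℝ) < |l2 - l1| := abs_pos.mpr hdne
  have habsl2 : |l2| = |l1| := by rw [hopp, abs_neg]
  have hdiv : ∀ x y : ℝ, x ≤ y → x / |l2 - l1| ≤ y / |l2 - l1| := fun x y hxy => by gcongr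
  set c0 : ℝ := |l1| + |a1| + |a2| with hc0
  set c1 : ℝ := |a3| + |l1| + |a4| with hc1
  set K : ℝ := (2 * c0 + 2 * c1) / |l2 - l1| with hKdef
  have hc00 : 0 < c0 := by
    have := abs_nonneg a1; have := abs_nonneg a2; rw [hc0]; linarith
  have hc10 : 0 ≤ c1 := by rw [hc1]; positivity
  have hK0 : 0 < K := div_pos (by linarith) hdp
  have hpowpos : ∀ j : ℕ, (0:ℝ) < |l1| ^ j := fun j => pow_pos hl0 j
  -- individual bounds with uniform constant
  have hAb : ∀ (j : ℕ) (s : Sphere2),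
      |A1 a1 a2 a3 a4 l1 l2 j s| ≤ (c0 / |l2 - l1|) * |l1| ^ j := by
    intro j s
    have h := A1_bound a1 a2 a3 a4 l1 l2 j s
    rwa [habsl2] at h
  have hBb : ∀ (j : ℕ) (s : Sphere2),
      |B1 a1 a2 a3 a4 l1 l2 j s| ≤ (c0 / |l2 - l1|) * |l1| ^ j := by
    intro j s
    have h := B1_bound a1 a2 a3 a4 l1 l2 j s
    rwa [habsl2] at h
  have hCb : ∀ (j : ℕ) (s : Sphere2),
      |C1 a1 a2 a3 a4 l1 l2 j s| ≤ K * |l1| ^ j := by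
    intro j s
    have h := C1_bound a1 a2 a3 a4 l1 l2 j s
    rw [habsl2] at h
    refine h.trans ?_
    have he : (c1 / |l2 - l1|) * |l1| ^ j + (c1 / |l2 - l1|) * |l1| ^ j
        = ((2 * c1) / |l2 - l1|) * |l1| ^ j := by ring
    rw [hc1] at he
    rw [he]
    exact mul_le_mul_of_nonneg_right (hdiv _ _ (by linarith)) (hpowpos j).le
  have hAK : ∀ (j : ℕ) (s : Sphere2),
      |A1 a1 a2 a3 a4 l1 l2 j s| ≤ K * |l1| ^ j := fun j s =>
    (hAb j s).trans (mul_le_mul_of_nonneg_right (hdiv _ _ (by linarith)) (hpowpos j).le)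
  have hBK : ∀ (j : ℕ) (s : Sphere2),
      |B1 a1 a2 a3 a4 l1 l2 j s| ≤ K * |l1| ^ j := fun j s =>
    (hBb j s).trans (mul_le_mul_of_nonneg_right (hdiv _ _ (by linarith)) (hpowpos j).le)
  have hGeb : ∀ (j : ℕ) (s : Sphere2),
      |A1 a1 a2 a3 a4 l1 l2 j s + B1 a1 a2 a3 a4 l1 l2 j s| ≤ K * |l1| ^ j := by
    intro j s
    refine (abs_add_le _ _).trans ?_
    have h := add_le_add (hAb j s) (hBb j s)
    refine h.trans ?_
    have he : (c0 / |l2 - l1|) * |l1| ^ j + (c0 / |l2 - l1|) * |l1| ^ j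
        = ((2 * c0) / |l2 - l1|) * |l1| ^ j := by ring
    rw [he]
    exact mul_le_mul_of_nonneg_right (hdiv _ _ (by linarith)) (hpowpos j).le
  have hGob : ∀ (j : ℕ) (s : Sphere2),
      |A1 a1 a2 a3 a4 l1 l2 j s - B1 a1 a2 a3 a4 l1 l2 j s| ≤ K * |l1| ^ j := by
    intro j s
    refine (abs_sub _ _).trans ?_
    have h := add_le_add (hAb j s) (hBb j s)
    refine h.trans ?_
    have he : (c0 / |l2 - l1|) * |l1| ^ j + (c0 / |l2 - l1|) * |l1| ^ j
        = ((2 * c0) / |l2 - l1|) * |l1| ^ j := by ring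
    rw [he]
    exact mul_le_mul_of_nonneg_right (hdiv _ _ (by linarith)) (hpowpos j).le
  -- epsilon sequences
  have hpow2 : |l1 ^ 2| < 1 := by
    rw [abs_pow]
    exact pow_lt_one₀ (abs_nonneg l1) habs1 (by norm_num)
  have hεe : Tendsto (fun k : ℕ => l1 ^ (2 * k)) atTop (𝓝 0) := by
    have h := tendsto_pow_atTop_nhds_zero_of_abs_lt_one hpow2
    simpa [pow_mul] using h
  have hεe0 : ∀ k : ℕ, l1 ^ (2 * k) ≠ 0 := fun k => pow_ne_zero _ hl1ne
  have hεo : Tendsto (fun k : ℕ => l1 ^ (2 * k + 1)) atTop (𝓝 0) := by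
    have h := (tendsto_pow_atTop_nhds_zero_of_abs_lt_one hpow2).mul_const l1
    rw [zero_mul] at h
    simpa [pow_succ, pow_mul] using h
  have hεo0 : ∀ k : ℕ, l1 ^ (2 * k + 1) ≠ 0 := fun k => pow_ne_zero _ hl1ne
  have hcoefe : ∀ k : ℕ, l2 ^ (2 * k) = l1 ^ (2 * k) := fun k => by
    rw [hopp]; exact Even.neg_pow (even_two_mul k) l1
  have hcoefo : ∀ k : ℕ, l2 ^ (2 * k + 1) = -(l1 ^ (2 * k + 1)) := fun k => by
    rw [hopp]; exact Odd.neg_pow (odd_two_mul_add_one k) l1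
  -- summability and integrability
  have hMpos : ∀ j : ℕ, (0:ℝ) < K * |l1| ^ j := fun j => mul_pos hK0 (hpowpos j)
  have hMeq : ∀ j : ℕ, (K * |l1| ^ j) * (K * |l1| ^ j) ^ (α - 1)
      = K ^ α * (|l1| ^ α) ^ j := by
    intro j
    rw [mul_comm, ← Real.rpow_add_one (hMpos j).ne', show α - 1 + 1 = α by ring]
    exact rpow_geom_eq hK0.le (abs_nonneg l1) α j
  have hsgeom : Summable (fun j : ℕ => (K ^ α * (|l1| ^ α) ^ j) * (Γ Set.univ).toReal) :=
    ((summable_geometric_of_lt_one (Real.rpow_nonneg (abs_nonneg l1) α)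
      (Real.rpow_lt_one (abs_nonneg l1) habs1 hα0)).mul_left (K ^ α)).mul_right _
  have hprod : ∀ (F : ℕ → Sphere2 → ℝ), (∀ j s, |F j s| ≤ K * |l1| ^ j) → ∀ j s,
      ‖F j s * spow (C1 a1 a2 a3 a4 l1 l2 j s) (α - 1)‖
        ≤ (K * |l1| ^ j) * (K * |l1| ^ j) ^ (α - 1) := by
    intro F hF j s
    rw [Real.norm_eq_abs, abs_mul]
    exact mul_le_mul (hF j s) ((abs_spow_le _ _).trans
      (Real.rpow_le_rpow (abs_nonneg _) (hCb j s) hα10.le)) (abs_nonneg _) (hMpos j).le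
  have hmspowC : ∀ j : ℕ, Measurable fun s : Sphere2 =>
      spow (C1 a1 a2 a3 a4 l1 l2 j s) (α - 1) := fun j =>
    (measurable_spow hα10).comp (measurable_C1 a1 a2 a3 a4 l1 l2 j)
  have hintA : ∀ j : ℕ, Integrable
      (fun s => A1 a1 a2 a3 a4 l1 l2 j s * spow (C1 a1 a2 a3 a4 l1 l2 j s) (α - 1)) Γ :=
    fun j => Integrable.mono' (integrable_const _)
      (((measurable_A1 a1 a2 a3 a4 l1 l2 j).mul (hmspowC j)).aestronglyMeasurable)
      (ae_of_all _ (hprod _ hAK j))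
  have hintB : ∀ j : ℕ, Integrable
      (fun s => B1 a1 a2 a3 a4 l1 l2 j s * spow (C1 a1 a2 a3 a4 l1 l2 j s) (α - 1)) Γ :=
    fun j => Integrable.mono' (integrable_const _)
      (((measurable_B1 a1 a2 a3 a4 l1 l2 j).mul (hmspowC j)).aestronglyMeasurable)
      (ae_of_all _ (hprod _ hBK j))
  have hsumA : Summable (fun j : ℕ =>
      ∫ s, A1 a1 a2 a3 a4 l1 l2 j s * spow (C1 a1 a2 a3 a4 l1 l2 j s) (α - 1) ∂Γ) := by
    refine Summable.of_norm_bounded hsgeom fun j => ?_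
    refine (norm_integral_le_of_norm_le_const (ae_of_all _ fun s => hprod _ hAK j s)).trans ?_
    exact le_of_eq (by rw [hMeq j]; rfl)
  have hsumB : Summable (fun j : ℕ =>
      ∫ s, B1 a1 a2 a3 a4 l1 l2 j s * spow (C1 a1 a2 a3 a4 l1 l2 j s) (α - 1) ∂Γ) := by
    refine Summable.of_norm_bounded hsgeom fun j => ?_
    refine (norm_integral_le_of_norm_le_const (ae_of_all _ fun s => hprod _ hBK j s)).trans ?_
    exact le_of_eq (by rw [hMeq j]; rfl)
  have hvale : α * (D1 Γ α a1 a2 a3 a4 l1 l2 + D2 Γ α a1 a2 a3 a4 l1 l2)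
      = ∑' j : ℕ, ∫ s, α * ((A1 a1 a2 a3 a4 l1 l2 j s + B1 a1 a2 a3 a4 l1 l2 j s)
          * spow (C1 a1 a2 a3 a4 l1 l2 j s) (α - 1)) ∂Γ := by
    rw [D1, D2, ← Summable.tsum_add hsumA hsumB, ← tsum_mul_left]
    refine tsum_congr fun j => ?_
    rw [← integral_add (hintA j) (hintB j), ← integral_const_mul]
    refine integral_congr_ae (ae_of_all _ fun s => ?_)
    ring
  have hvalo : α * (D1 Γ α a1 a2 a3 a4 l1 l2 - D2 Γ α a1 a2 a3 a4 l1 l2)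
      = ∑' j : ℕ, ∫ s, α * ((A1 a1 a2 a3 a4 l1 l2 j s - B1 a1 a2 a3 a4 l1 l2 j s)
          * spow (C1 a1 a2 a3 a4 l1 l2 j s) (α - 1)) ∂Γ := by
    rw [D1, D2, ← Summable.tsum_sub hsumA hsumB, ← tsum_mul_left]
    refine tsum_congr fun j => ?_
    rw [← integral_sub (hintA j) (hintB j), ← integral_const_mul]
    refine integral_congr_ae (ae_of_all _ fun s => ?_)
    ring
  constructor
  · have Hk := key_tendsto Γ hα1
      (fun j s => A1 a1 a2 a3 a4 l1 l2 j s + B1 a1 a2 a3 a4 l1 l2 j s)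
      (fun j s => C1 a1 a2 a3 a4 l1 l2 j s) K |l1| hK0.le (abs_nonneg l1) habs1
      (fun j => (measurable_A1 a1 a2 a3 a4 l1 l2 j).add (measurable_B1 a1 a2 a3 a4 l1 l2 j))
      (fun j => measurable_C1 a1 a2 a3 a4 l1 l2 j) hGeb hCb
      (fun k => l1 ^ (2 * k)) hεe hεe0
    rw [hvale]
    refine Hk.congr fun k => ?_
    rw [CDneg, ← tsum_div_const]
    refine tsum_congr fun j => ?_
    congr 1
    refine integral_congr_ae (ae_of_all _ fun s => ?_)
    simp only [hcoefe k, mul_add]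
  · have Hk := key_tendsto Γ hα1
      (fun j s => A1 a1 a2 a3 a4 l1 l2 j s - B1 a1 a2 a3 a4 l1 l2 j s)
      (fun j s => C1 a1 a2 a3 a4 l1 l2 j s) K |l1| hK0.le (abs_nonneg l1) habs1
      (fun j => (measurable_A1 a1 a2 a3 a4 l1 l2 j).sub (measurable_B1 a1 a2 a3 a4 l1 l2 j))
      (fun j => measurable_C1 a1 a2 a3 a4 l1 l2 j) hGob hCb
      (fun k => l1 ^ (2 * k + 1)) hεo hεo0
    rw [hvalo]
    refine Hk.congr fun k => ?_
    rw [CDneg, ← tsum_div_const]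
    refine tsum_congr fun j => ?_
    congr 1
    refine integral_congr_ae (ae_of_all _ fun s => ?_)
    simp only [hcoefo k, neg_mul, mul_sub, ← sub_eq_add_neg]
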